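/- arXiv:1810.05446 — 3 statements merged into one kernel-verified Lean document; each statement's English description precedes it below -/
import Mathlib

section
/- For any finite DAG G, the cardinality of its equivalence class under the relation 'equal transitive closure' equals 2^(l − r), where l is the number of edges of the transitive closure of G and r is the number of edges of the transitive reduction of G. Equivalently, the equivalence class consists exactly of the graphs (V, E_red ∪ D) for D ranging over subsets of E_cl \ E_red. -/
/-!
An edge `(a, b)` of the transitive reduction admits no `c` with `a < c < b` in the transitive
closure: by acyclicity, paths `a → c` and `c → b` in the reduction avoid the edge `(a, b)`, which
could then be removed without changing reachability, against minimality. Hence every `H` with the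
same transitive closure as `E` contains the reduction, and is contained in the closure; conversely
every `H` in this interval has that closure. The class is the interval `[E_red, E_cl]` of finsets,
of cardinality `2 ^ (l - r)`.
-/

open Relation Finset

namespace Relation

variable {α : Type*} {r s t : α → α → Prop} {a b : α}

lemma TransGen.exists_mid_of_not (hab : TransGen r a b) (hn : ¬ r a b) :
    ∃ c, TransGen r a c ∧ TransGen r c b := by
  cases hab with
  | single h => exact absurd h hn
  | tail hac hcb => exact ⟨_, hac, .single hcb⟩

lemma transGen_eq_of_le_of_reflTransGen_eq (hrs : r ≤ s) (hs : ∀ v, ¬ TransGen s v v)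
    (hrefl : ReflTransGen r = ReflTransGen s) : TransGen r = TransGen s := by
  refine le_antisymm (TransGen.mono hrs) fun x y hxy => ?_
  rcases reflTransGen_iff_eq_or_transGen.1 (hrefl ▸ hxy.to_reflTransGen) with rfl | h
  · exact absurd hxy (hs _)
  · exact h

lemma transGen_eq_of_le_of_le_transGen (hrt : r ≤ t) (hts : t ≤ TransGen s)
    (hsr : TransGen s ≤ TransGen r) : TransGen t = TransGen s :=
  le_antisymm (TransGen.closed hts) (hsr.trans (TransGen.mono hrt))

end Relation

namespace Finset

variable {α : Type*} [DecidableEq α]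

lemma reflTransGen_erase_or {s : Finset (α × α)} (e : α × α) {x y : α}
    (hxy : ReflTransGen (fun a b => (a, b) ∈ s) x y) :
    ReflTransGen (fun a b => (a, b) ∈ s.erase e) x y ∨
      ReflTransGen (fun a b => (a, b) ∈ s) x e.1 ∧ ReflTransGen (fun a b => (a, b) ∈ s) e.2 y := by
  induction hxy with
  | refl => exact .inl .refl
  | @tail z w hxz hzw ih =>
    by_cases hzw_e : (z, w) = e
    · exact .inr (hzw_e ▸ ⟨hxz, .refl⟩)
    · rcases ih with hxz' | ⟨hxe, hez⟩
      · exact .inl (hxz'.tail (mem_erase.2 ⟨hzw_e, hzw⟩))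
      · exact .inr ⟨hxe, hez.tail hzw⟩

lemma reflTransGen_erase_eq {s : Finset (α × α)} {a b : α}
    (hab : ReflTransGen (fun x y => (x, y) ∈ s.erase (a, b)) a b) :
    ReflTransGen (fun x y => (x, y) ∈ s.erase (a, b)) = ReflTransGen (fun x y => (x, y) ∈ s) := by
  refine le_antisymm (ReflTransGen.mono fun x y => mem_of_mem_erase) (reflTransGen_closed ?_)
  intro x y hxy
  by_cases he : (x, y) = (a, b)
  · obtain ⟨rfl, rfl⟩ := Prod.mk.inj he
    exact hab
  · exact .single (mem_erase.2 ⟨he, hxy⟩)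

lemma subset_and_forall_iff_exists_union {s H : Finset α} {P : α → Prop} (hs : ∀ p ∈ s, P p) :
    (s ⊆ H ∧ ∀ p ∈ H, P p) ↔ ∃ D : Finset α, (∀ p ∈ D, P p) ∧ H = s ∪ D := by
  constructor
  · rintro ⟨hsH, hH⟩
    exact ⟨H, hH, (union_eq_right.2 hsH).symm⟩
  · rintro ⟨D, hD, rfl⟩
    exact ⟨subset_union_left, fun p hp => (mem_union.1 hp).elim (hs p) (hD p)⟩

lemma card_subtype_subset_and_forall [Fintype α] (s : Finset α) (P : α → Prop) [DecidablePred P]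
    (hs : ∀ p ∈ s, P p) :
    Nat.card {H : Finset α // s ⊆ H ∧ ∀ p ∈ H, P p} = 2 ^ ((univ.filter P).card - s.card) := by
  have hmem (H : Finset α) : (s ⊆ H ∧ ∀ p ∈ H, P p) ↔ H ∈ Icc s (univ.filter P) := by
    simp [subset_iff]
  rw [Nat.card_congr (Equiv.subtypeEquivRight hmem), Nat.card_eq_finsetCard,
    card_Icc_finset fun p hp => mem_filter.2 ⟨mem_univ p, hs p hp⟩]

end Finset

section TransReduction

variable {α : Type*} [DecidableEq α]

structure IsTransReduction (Ered E : Finset (α × α)) : Prop where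
  subset : Ered ⊆ E
  reflTransGen_eq :
    ReflTransGen (fun a b => (a, b) ∈ Ered) = ReflTransGen (fun a b => (a, b) ∈ E)
  minimal : ∀ D ⊆ Ered, ReflTransGen (fun a b => (a, b) ∈ D) =
    ReflTransGen (fun a b => (a, b) ∈ E) → D = Ered

variable {E Ered : Finset (α × α)}

namespace IsTransReduction

lemma not_transGen_of_mem (hred : IsTransReduction Ered E)
    (hdag : ∀ v, ¬ TransGen (fun a b => (a, b) ∈ E) v v)
    {a b c : α} (hab : (a, b) ∈ Ered) (hac : TransGen (fun a b => (a, b) ∈ E) a c)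
    (hcb : TransGen (fun a b => (a, b) ∈ E) c b) : False := by
  have hreach := hred.reflTransGen_eq
  -- by acyclicity, the paths `a → c` and `c → b` in `Ered` avoid the edge `(a, b)`
  have hac' : ReflTransGen (fun x y => (x, y) ∈ Ered.erase (a, b)) a c :=
    (reflTransGen_erase_or (a, b) (hreach ▸ hac.to_reflTransGen)).resolve_right
      fun ⟨_, hbc⟩ => hdag b (TransGen.trans_right (hreach ▸ hbc) hcb)
  have hcb' : ReflTransGen (fun x y => (x, y) ∈ Ered.erase (a, b)) c b :=
    (reflTransGen_erase_or (a, b) (hreach ▸ hcb.to_reflTransGen)).resolve_right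
      fun ⟨hca, _⟩ => hdag a (hac.trans_left (hreach ▸ hca))
  have herase : Ered.erase (a, b) = Ered :=
    hred.minimal _ (erase_subset _ _) ((reflTransGen_erase_eq (hac'.trans hcb')).trans hreach)
  exact (herase ▸ notMem_erase (a, b) Ered) hab

lemma subset_of_transGen_eq (hred : IsTransReduction Ered E)
    (hdag : ∀ v, ¬ TransGen (fun a b => (a, b) ∈ E) v v) {H : Finset (α × α)}
    (hH : TransGen (fun a b => (a, b) ∈ H) = TransGen (fun a b => (a, b) ∈ E)) : Ered ⊆ H := by
  rintro ⟨a, b⟩ hab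
  by_contra habH
  have hab' : TransGen (fun a b => (a, b) ∈ H) a b := hH ▸ .single (hred.subset hab)
  obtain ⟨c, hac, hcb⟩ := hab'.exists_mid_of_not habH
  exact hred.not_transGen_of_mem hdag hab (hH ▸ hac) (hH ▸ hcb)

lemma transGen_eq_iff (hred : IsTransReduction Ered E)
    (hdag : ∀ v, ¬ TransGen (fun a b => (a, b) ∈ E) v v) (H : Finset (α × α)) :
    TransGen (fun a b => (a, b) ∈ H) = TransGen (fun a b => (a, b) ∈ E) ↔
      Ered ⊆ H ∧ ∀ p ∈ H, TransGen (fun a b => (a, b) ∈ E) p.1 p.2 := by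
  constructor
  · exact fun hH => ⟨hred.subset_of_transGen_eq hdag hH, fun p hp => hH ▸ .single hp⟩
  · rintro ⟨hredH, hHcl⟩
    have hred_eq : TransGen (fun a b => (a, b) ∈ Ered) = TransGen (fun a b => (a, b) ∈ E) :=
      transGen_eq_of_le_of_reflTransGen_eq (fun x y hxy => hred.subset hxy) hdag
        hred.reflTransGen_eq
    exact transGen_eq_of_le_of_le_transGen (fun x y hxy => hredH hxy)
      (fun x y hxy => hHcl (x, y) hxy) hred_eq.ge

end IsTransReduction

end TransReduction

/-- for a finite DAG `G = (V, E)` with transitive closure having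
`l` edges and transitive reduction `Ered` having `r` edges, the equivalence
class of `G` under "equal transitive closure" has cardinality `2 ^ (l - r)`;
equivalently, the class consists exactly of the graphs `Ered ∪ D` for `D`
ranging over subsets of the edges of the transitive closure. -/
theorem dag_class_card {V : Type*} [Fintype V] [DecidableEq V]
    (E Ered : Finset (V × V)) (l r : ℕ)
    (hdag : ∀ v, ¬ Relation.TransGen (fun a b => (a, b) ∈ E) v v)
    (hsub : Ered ⊆ E)
    (hreach : Relation.ReflTransGen (fun a b => (a, b) ∈ Ered) =
      Relation.ReflTransGen (fun a b => (a, b) ∈ E))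
    (hmin : ∀ D ⊆ Ered, Relation.ReflTransGen (fun a b => (a, b) ∈ D) =
      Relation.ReflTransGen (fun a b => (a, b) ∈ E) → D = Ered)
    (hl : l = Set.ncard {p : V × V | Relation.TransGen (fun a b => (a, b) ∈ E) p.1 p.2})
    (hr : r = Ered.card) :
    Nat.card {H : Finset (V × V) //
        (∀ v, ¬ Relation.TransGen (fun a b => (a, b) ∈ H) v v) ∧
        Relation.TransGen (fun a b => (a, b) ∈ H) =
          Relation.TransGen (fun a b => (a, b) ∈ E)} = 2 ^ (l - r) ∧
    ∀ H : Finset (V × V),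
      ((∀ v, ¬ Relation.TransGen (fun a b => (a, b) ∈ H) v v) ∧
        Relation.TransGen (fun a b => (a, b) ∈ H) =
          Relation.TransGen (fun a b => (a, b) ∈ E)) ↔
      ∃ D : Finset (V × V),
        (∀ p ∈ D, Relation.TransGen (fun a b => (a, b) ∈ E) p.1 p.2) ∧ H = Ered ∪ D := by
  classical
  have hred : IsTransReduction Ered E := ⟨hsub, hreach, hmin⟩
  have hred_cl : ∀ p ∈ Ered, TransGen (fun a b => (a, b) ∈ E) p.1 p.2 :=
    fun p hp => .single (hsub hp)
  have hclass (H : Finset (V × V)) :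
      ((∀ v, ¬ TransGen (fun a b => (a, b) ∈ H) v v) ∧
        TransGen (fun a b => (a, b) ∈ H) = TransGen (fun a b => (a, b) ∈ E)) ↔
      Ered ⊆ H ∧ ∀ p ∈ H, TransGen (fun a b => (a, b) ∈ E) p.1 p.2 := by
    rw [and_iff_right_of_imp fun hH => hH ▸ hdag]
    exact hred.transGen_eq_iff hdag H
  refine ⟨?_, fun H => (hclass H).trans (subset_and_forall_iff_exists_union hred_cl)⟩
  rw [Nat.card_congr (Equiv.subtypeEquivRight hclass), card_subtype_subset_and_forall _ _ hred_cl,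
    hl, hr, Set.ncard_eq_toFinset_card', Set.toFinset_ofPred]
end

section
/- Every finite DAG has a unique transitive reduction: there is a unique minimal set of edges D ⊆ E such that the reachability relation of (V,D) equals the reachability relation of (V,E). -/
/-!
The reduction keeps exactly the edges `a → b` of `E` that are not bypassed by a path
`a →⁺ c →⁺ b`. Any reachability `a →⁺ b` is either such an edge or splits at a bypass point
into two reachabilities with strictly smaller sets of intermediate vertices; since the graph
is finite, this recursion ends in unbypassed edges. Conversely, an unbypassed edge `a → b` must
be the first step of any path from `a` to `b` inside a reachability-preserving subgraph, so
it lies in every such subgraph; this gives both minimality and uniqueness.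
-/

open Relation

namespace Relation

variable {α : Type*} {r s : α → α → Prop} {a b c : α}

def TransReduction (r : α → α → Prop) (a b : α) : Prop :=
  r a b ∧ ∀ c, TransGen r a c → ¬ TransGen r c b

def between (r : α → α → Prop) (a b : α) : Set α :=
  {x | ReflTransGen r a x ∧ ReflTransGen r x b}

theorem TransGen.rel_or_exists_trans (hab : TransGen r a b) :
    r a b ∨ ∃ c, TransGen r a c ∧ TransGen r c b := by
  obtain ⟨x, hax, hxb⟩ := TransGen.head'_iff.1 hab
  rcases reflTransGen_iff_eq_or_transGen.1 hxb with rfl | hxb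
  · exact .inl hax
  · exact .inr ⟨x, .single hax, hxb⟩

theorem between_ssubset_between_left (hr : ∀ a, ¬ TransGen r a a)
    (hac : ReflTransGen r a c) (hcb : TransGen r c b) : between r a c ⊂ between r a b := by
  refine Set.ssubset_iff_subset_ne.2 ⟨fun x hx => ⟨hx.1, hx.2.trans hcb.to_reflTransGen⟩, ?_⟩
  intro h
  have hb : b ∈ between r a c := h ▸ ⟨hac.trans hcb.to_reflTransGen, .refl⟩
  exact hr c (hcb.trans_left hb.2)

theorem between_ssubset_between_right (hr : ∀ a, ¬ TransGen r a a)
    (hac : TransGen r a c) (hcb : ReflTransGen r c b) : between r c b ⊂ between r a b := by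
  refine Set.ssubset_iff_subset_ne.2 ⟨fun x hx => ⟨hac.to_reflTransGen.trans hx.1, hx.2⟩, ?_⟩
  intro h
  have ha : a ∈ between r c b := h.symm ▸ ⟨.refl, hac.to_reflTransGen.trans hcb⟩
  exact hr c (hac.trans_right ha.1)

theorem TransGen.reflTransGen_transReduction [Finite α] (hr : ∀ a, ¬ TransGen r a a)
    {a b : α} (hab : TransGen r a b) : ReflTransGen (TransReduction r) a b := by
  by_cases hbypass : ∃ c, TransGen r a c ∧ TransGen r c b
  · obtain ⟨c, hac, hcb⟩ := hbypass
    have := Set.ncard_lt_ncard (between_ssubset_between_left hr hac.to_reflTransGen hcb)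
    have := Set.ncard_lt_ncard (between_ssubset_between_right hr hac hcb.to_reflTransGen)
    exact (hac.reflTransGen_transReduction hr).trans (hcb.reflTransGen_transReduction hr)
  · refine .single ⟨hab.rel_or_exists_trans.resolve_right hbypass, fun c hac hcb => ?_⟩
    exact hbypass ⟨c, hac, hcb⟩
termination_by (between r a b).ncard

theorem reflTransGen_transReduction [Finite α] (hr : ∀ a, ¬ TransGen r a a) :
    ReflTransGen (TransReduction r) = ReflTransGen r := by
  ext a b
  refine ⟨ReflTransGen.mono (fun _ _ h => h.1) a b, fun hab => ?_⟩
  rcases reflTransGen_iff_eq_or_transGen.1 hab with rfl | hab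
  · exact .refl
  · exact hab.reflTransGen_transReduction hr

theorem TransReduction.rel_of_reflTransGen_eq (hr : ∀ a, ¬ TransGen r a a)
    (hsr : ∀ a b, s a b → r a b) (hs : ReflTransGen s = ReflTransGen r)
    (hab : TransReduction r a b) : s a b := by
  have hsab : ReflTransGen s a b := hs ▸ .single hab.1
  rcases hsab.cases_head with rfl | ⟨c, hac, hcb⟩
  · exact absurd (.single hab.1) (hr a)
  rcases reflTransGen_iff_eq_or_transGen.1 (hs ▸ hcb : ReflTransGen r c b) with rfl | hcb
  · exact hac
  · exact absurd hcb (hab.2 c (.single (hsr a c hac)))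

end Relation

theorem dag_unique_transitive_reduction_general {V : Type*} [Fintype V]
    (E : Finset (V × V))
    (hdag : ∀ v, ¬ Relation.TransGen (fun a b => (a, b) ∈ E) v v) :
    ∃! D : Finset (V × V), D ⊆ E ∧
      Relation.ReflTransGen (fun a b => (a, b) ∈ D) =
        Relation.ReflTransGen (fun a b => (a, b) ∈ E) ∧
      ∀ D' ⊂ D, Relation.ReflTransGen (fun a b => (a, b) ∈ D') ≠
        Relation.ReflTransGen (fun a b => (a, b) ∈ E) := by
  set R := TransReduction fun a b => (a, b) ∈ E
  obtain ⟨D₀, hD₀⟩ : ∃ D₀ : Finset (V × V), (fun a b => (a, b) ∈ D₀) = R := by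
    classical
    exact ⟨E.filter fun p => R p.1 p.2, by ext a b; simpa using fun h : R a b => h.1⟩
  have hD₀E : D₀ ⊆ E := fun ⟨a, b⟩ hab => (congrFun₂ hD₀ a b ▸ hab : R a b).1
  have hclosure :
      ReflTransGen (fun a b => (a, b) ∈ D₀) = ReflTransGen (fun a b => (a, b) ∈ E) :=
    hD₀ ▸ reflTransGen_transReduction hdag
  have hmin : ∀ D ⊆ E,
      ReflTransGen (fun a b => (a, b) ∈ D) = ReflTransGen (fun a b => (a, b) ∈ E) → D₀ ⊆ D :=
    fun D hDE hD ⟨a, b⟩ hab =>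
      (congrFun₂ hD₀ a b ▸ hab : R a b).rel_of_reflTransGen_eq hdag (fun _ _ h => hDE h) hD
  refine ⟨D₀, ⟨hD₀E, hclosure, fun D' hD' hD'E => ?_⟩, ?_⟩
  · exact hD'.2 (hmin D' (hD'.1.trans hD₀E) hD'E)
  · rintro D ⟨hDE, hD, hDmin⟩
    by_contra hne
    exact hDmin D₀ ((hmin D hDE hD).ssubset_of_ne (Ne.symm hne)) hclosure

/-- every finite DAG `(V, E)` has a unique transitive reduction:
there is a unique minimal edge set `D ⊆ E` such that the reachability relation
(existence of a directed path) of `(V, D)` equals that of `(V, E)`, minimality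
meaning that no proper subset of `D` preserves the reachability relation. -/
theorem dag_unique_transitive_reduction {V : Type*} [Fintype V] [DecidableEq V]
    (E : Finset (V × V))
    (hdag : ∀ v, ¬ Relation.TransGen (fun a b => (a, b) ∈ E) v v) :
    ∃! D : Finset (V × V), D ⊆ E ∧
      Relation.ReflTransGen (fun a b => (a, b) ∈ D) =
        Relation.ReflTransGen (fun a b => (a, b) ∈ E) ∧
      ∀ D' ⊂ D, Relation.ReflTransGen (fun a b => (a, b) ∈ D') ≠
        Relation.ReflTransGen (fun a b => (a, b) ∈ E) :=
  dag_unique_transitive_reduction_general E hdag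
end

section
/- If a DAG G equals its own transitive closure (i.e., its edge relation is transitive), then the equivalence class of G under 'equal transitive closure' has cardinality 2^(l−r) where l and r are the edge counts of G's transitive closure and reduction, and G is the unique maximal element (by edge-set inclusion) of its class. -/
/-!
Every member `H` of the class lies in `E`, since each edge of `H` is an `H`-path and `E` is its own
transitive closure. It also contains every edge `(a, b)` of the reduction: otherwise the `H`-path
from `a` to `b` passes through some `c`, acyclicity forces every `Ered`-path from `a` to `c` and from
`c` to `b` to avoid `(a, b)`, and so `Ered.erase (a, b)` would have the same reachability,
contradicting minimality. Conversely every `H` with `Ered ⊆ H ⊆ E` lies in the class. Hence the class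
is the interval `[Ered, E]` of edge sets, which has `2 ^ (|E| - |Ered|)` elements and top `E`.
-/

open Relation

namespace Relation

variable {α : Type*} {r : α → α → Prop} {a b x y : α}

theorem ReflTransGen.avoid_edge (h : ReflTransGen r x y)
    (hab : ¬ (ReflTransGen r x a ∧ ReflTransGen r b y)) :
    ReflTransGen (fun u v => r u v ∧ (u, v) ≠ (a, b)) x y := by
  induction h with
  | refl => exact .refl
  | @tail z w _ hzw ih =>
    by_cases hzw_ab : (z, w) = (a, b)
    · obtain ⟨rfl, rfl⟩ := Prod.mk.inj hzw_ab
      exact absurd ⟨‹_›, .refl⟩ hab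
    · exact (ih fun ⟨hxa, hbz⟩ => hab ⟨hxa, hbz.tail hzw⟩).tail ⟨hzw, hzw_ab⟩

theorem reflTransGen_avoid_edge_eq
    (h : ReflTransGen (fun u v => r u v ∧ (u, v) ≠ (a, b)) a b) :
    ReflTransGen (fun u v => r u v ∧ (u, v) ≠ (a, b)) = ReflTransGen r := by
  refine le_antisymm (ReflTransGen.mono fun _ _ huv => huv.1)
    (reflTransGen_closed fun u v huv => ?_)
  by_cases huv_ab : (u, v) = (a, b)
  · obtain ⟨rfl, rfl⟩ := Prod.mk.inj huv_ab
    exact h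
  · exact .single ⟨huv, huv_ab⟩

end Relation

section EdgeSets

variable {V : Type*} {E Ered H : Finset (V × V)}

theorem subset_of_transGen_eq (htrans : ∀ a b c : V, (a, b) ∈ E → (b, c) ∈ E → (a, c) ∈ E)
    (hH : TransGen (fun a b => (a, b) ∈ H) = TransGen (fun a b => (a, b) ∈ E)) : H ⊆ E := by
  have : IsTrans V (fun a b => (a, b) ∈ E) := ⟨htrans⟩
  rintro ⟨a, b⟩ hab
  have hHab : TransGen (fun a b => (a, b) ∈ H) a b := .single hab
  rwa [hH, transGen_eq_self] at hHab

theorem notMem_reduction_of_mem_of_mem [DecidableEq V]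
    (hdag : ∀ v, ¬ TransGen (fun a b => (a, b) ∈ E) v v)
    (hreach : ReflTransGen (fun a b => (a, b) ∈ Ered) = ReflTransGen (fun a b => (a, b) ∈ E))
    (hmin : ∀ D ⊆ Ered, ReflTransGen (fun a b => (a, b) ∈ D) =
      ReflTransGen (fun a b => (a, b) ∈ E) → D = Ered)
    {a b c : V} (hac : (a, c) ∈ E) (hcb : (c, b) ∈ E) : (a, b) ∉ Ered := by
  intro hab
  have hreach_iff {x y : V} := iff_of_eq (congrFun₂ hreach x y)
  have hac' := (hreach_iff.2 (.single hac)).avoid_edge (a := a) (b := b)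
    fun ⟨_, hbc⟩ => hdag b (.tail' (hreach_iff.1 hbc) hcb)
  have hcb' := (hreach_iff.2 (.single hcb)).avoid_edge (a := a) (b := b)
    fun ⟨hca, _⟩ => hdag c (.tail' (hreach_iff.1 hca) hac)
  have herase : (fun u v => (u, v) ∈ Ered.erase (a, b)) =
      fun u v => (u, v) ∈ Ered ∧ (u, v) ≠ (a, b) := by
    simp only [Finset.mem_erase, and_comm]
  have hsame := hmin _ (Ered.erase_subset (a, b))
    (by rw [herase, reflTransGen_avoid_edge_eq (hac'.trans hcb'), hreach])
  exact Ered.notMem_erase (a, b) (by rwa [hsame])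

theorem reduction_subset_of_transGen_eq
    (hdag : ∀ v, ¬ TransGen (fun a b => (a, b) ∈ E) v v)
    (htrans : ∀ a b c : V, (a, b) ∈ E → (b, c) ∈ E → (a, c) ∈ E)
    (hsub : Ered ⊆ E)
    (hreach : ReflTransGen (fun a b => (a, b) ∈ Ered) = ReflTransGen (fun a b => (a, b) ∈ E))
    (hmin : ∀ D ⊆ Ered, ReflTransGen (fun a b => (a, b) ∈ D) =
      ReflTransGen (fun a b => (a, b) ∈ E) → D = Ered)
    (hH : TransGen (fun a b => (a, b) ∈ H) = TransGen (fun a b => (a, b) ∈ E)) : Ered ⊆ H := by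
  classical
  have : IsTrans V (fun a b => (a, b) ∈ E) := ⟨htrans⟩
  rintro ⟨a, b⟩ hab
  have hHab : TransGen (fun a b => (a, b) ∈ H) a b := by
    rw [hH, transGen_eq_self]
    exact hsub hab
  cases hHab with
  | single h => exact h
  | tail hac hcb =>
    rw [hH, transGen_eq_self] at hac
    exact absurd hab <| notMem_reduction_of_mem_of_mem hdag hreach hmin hac
      (subset_of_transGen_eq htrans hH hcb)

theorem transGen_eq_of_subset_of_subset (hdag : ∀ v, ¬ TransGen (fun a b => (a, b) ∈ E) v v)
    (hreach : ReflTransGen (fun a b => (a, b) ∈ Ered) = ReflTransGen (fun a b => (a, b) ∈ E))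
    (hredH : Ered ⊆ H) (hHE : H ⊆ E) :
    TransGen (fun a b => (a, b) ∈ H) = TransGen (fun a b => (a, b) ∈ E) := by
  refine le_antisymm (TransGen.mono fun _ _ h => hHE h) fun x y hxy => ?_
  have hne : x ≠ y := by
    rintro rfl
    exact hdag x hxy
  have hHxy : ReflTransGen (fun a b => (a, b) ∈ H) x y :=
    ReflTransGen.mono (fun _ _ h => hredH h) _ _ (hreach ▸ hxy.to_reflTransGen)
  exact (reflTransGen_iff_eq_or_transGen.mp hHxy).resolve_left hne.symm

theorem acyclic_and_transGen_eq_iff_mem_Icc [DecidableEq V]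
    (hdag : ∀ v, ¬ TransGen (fun a b => (a, b) ∈ E) v v)
    (htrans : ∀ a b c : V, (a, b) ∈ E → (b, c) ∈ E → (a, c) ∈ E)
    (hsub : Ered ⊆ E)
    (hreach : ReflTransGen (fun a b => (a, b) ∈ Ered) = ReflTransGen (fun a b => (a, b) ∈ E))
    (hmin : ∀ D ⊆ Ered, ReflTransGen (fun a b => (a, b) ∈ D) =
      ReflTransGen (fun a b => (a, b) ∈ E) → D = Ered) :
    ((∀ v, ¬ TransGen (fun a b => (a, b) ∈ H) v v) ∧
      TransGen (fun a b => (a, b) ∈ H) = TransGen (fun a b => (a, b) ∈ E)) ↔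
      H ∈ Finset.Icc Ered E := by
  rw [Finset.mem_Icc]
  refine ⟨fun ⟨_, hH⟩ => ⟨reduction_subset_of_transGen_eq hdag htrans hsub hreach hmin hH,
    subset_of_transGen_eq htrans hH⟩, fun ⟨hredH, hHE⟩ => ?_⟩
  have hH := transGen_eq_of_subset_of_subset hdag hreach hredH hHE
  exact ⟨hH ▸ hdag, hH⟩

end EdgeSets

theorem transitively_closed_dag_class_general {V : Type*}
    (E Ered : Finset (V × V)) (l r : ℕ)
    (hdag : ∀ v, ¬ Relation.TransGen (fun a b => (a, b) ∈ E) v v)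
    (htrans : ∀ a b c : V, (a, b) ∈ E → (b, c) ∈ E → (a, c) ∈ E)
    (hsub : Ered ⊆ E)
    (hreach : Relation.ReflTransGen (fun a b => (a, b) ∈ Ered) =
      Relation.ReflTransGen (fun a b => (a, b) ∈ E))
    (hmin : ∀ D ⊆ Ered, Relation.ReflTransGen (fun a b => (a, b) ∈ D) =
      Relation.ReflTransGen (fun a b => (a, b) ∈ E) → D = Ered)
    (hl : l = Set.ncard {p : V × V | Relation.TransGen (fun a b => (a, b) ∈ E) p.1 p.2})
    (hr : r = Ered.card) :
    Nat.card {H : Finset (V × V) //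
        (∀ v, ¬ Relation.TransGen (fun a b => (a, b) ∈ H) v v) ∧
        Relation.TransGen (fun a b => (a, b) ∈ H) =
          Relation.TransGen (fun a b => (a, b) ∈ E)} = 2 ^ (l - r) ∧
    (∀ H : Finset (V × V),
      (∀ v, ¬ Relation.TransGen (fun a b => (a, b) ∈ H) v v) →
      Relation.TransGen (fun a b => (a, b) ∈ H) =
        Relation.TransGen (fun a b => (a, b) ∈ E) → H ⊆ E) ∧
    ∀ H : Finset (V × V),
      (∀ v, ¬ Relation.TransGen (fun a b => (a, b) ∈ H) v v) →
      Relation.TransGen (fun a b => (a, b) ∈ H) =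
        Relation.TransGen (fun a b => (a, b) ∈ E) →
      (∀ H' : Finset (V × V),
        (∀ v, ¬ Relation.TransGen (fun a b => (a, b) ∈ H') v v) →
        Relation.TransGen (fun a b => (a, b) ∈ H') =
          Relation.TransGen (fun a b => (a, b) ∈ E) → H' ⊆ H) → H = E := by
  classical
  have : IsTrans V (fun a b => (a, b) ∈ E) := ⟨htrans⟩
  have hl' : l = E.card := by
    rw [hl, transGen_eq_self, ← Set.ncard_coe_finset]
    rfl
  refine ⟨?_, fun H _ hH => subset_of_transGen_eq htrans hH, fun H _ hH hmax => ?_⟩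
  · rw [Nat.card_congr (Equiv.subtypeEquivRight fun H =>
        acyclic_and_transGen_eq_iff_mem_Icc hdag htrans hsub hreach hmin),
      Nat.card_eq_fintype_card, Fintype.card_coe, Finset.card_Icc_finset hsub, hl', hr]
  · exact (subset_of_transGen_eq htrans hH).antisymm (hmax E hdag rfl)

/-- if a finite DAG `G = (V, E)` is transitively closed (so `E`
equals its own transitive closure), with transitive reduction `Ered`, `l` edges
in the transitive closure and `r` edges in the transitive reduction, then the
equivalence class of `G` under "equal transitive closure" has cardinality
`2^(l-r)`, and `G` is the unique maximal element of its class under edge-set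
inclusion: every member of the class is contained in `G`, and any member
containing all members of the class equals `G`. -/
theorem transitively_closed_dag_class {V : Type*} [Fintype V] [DecidableEq V]
    (E Ered : Finset (V × V)) (l r : ℕ)
    (hdag : ∀ v, ¬ Relation.TransGen (fun a b => (a, b) ∈ E) v v)
    (htrans : ∀ a b c : V, (a, b) ∈ E → (b, c) ∈ E → (a, c) ∈ E)
    (hsub : Ered ⊆ E)
    (hreach : Relation.ReflTransGen (fun a b => (a, b) ∈ Ered) =
      Relation.ReflTransGen (fun a b => (a, b) ∈ E))
    (hmin : ∀ D ⊆ Ered, Relation.ReflTransGen (fun a b => (a, b) ∈ D) =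
      Relation.ReflTransGen (fun a b => (a, b) ∈ E) → D = Ered)
    (hl : l = Set.ncard {p : V × V | Relation.TransGen (fun a b => (a, b) ∈ E) p.1 p.2})
    (hr : r = Ered.card) :
    Nat.card {H : Finset (V × V) //
        (∀ v, ¬ Relation.TransGen (fun a b => (a, b) ∈ H) v v) ∧
        Relation.TransGen (fun a b => (a, b) ∈ H) =
          Relation.TransGen (fun a b => (a, b) ∈ E)} = 2 ^ (l - r) ∧
    (∀ H : Finset (V × V),
      (∀ v, ¬ Relation.TransGen (fun a b => (a, b) ∈ H) v v) →
      Relation.TransGen (fun a b => (a, b) ∈ H) =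
        Relation.TransGen (fun a b => (a, b) ∈ E) → H ⊆ E) ∧
    ∀ H : Finset (V × V),
      (∀ v, ¬ Relation.TransGen (fun a b => (a, b) ∈ H) v v) →
      Relation.TransGen (fun a b => (a, b) ∈ H) =
        Relation.TransGen (fun a b => (a, b) ∈ E) →
      (∀ H' : Finset (V × V),
        (∀ v, ¬ Relation.TransGen (fun a b => (a, b) ∈ H') v v) →
        Relation.TransGen (fun a b => (a, b) ∈ H') =
          Relation.TransGen (fun a b => (a, b) ∈ E) → H' ⊆ H) → H = E :=
  transitively_closed_dag_class_general E Ered l r hdag htrans hsub hreach hmin hl hr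
end
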